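/- arXiv:1202.4797 — 6 statements merged into one kernel-verified Lean document; each statement's English description precedes it below -/
import Mathlib

section
/- Let n be a positive integer and let b = (b_1, ..., b_n) be a nondecreasing vector with entries in {1, ..., n}. If b_i ≤ i for all i, then every element σ of S_M(b) = {σ ∈ S_n : σ(i) ≥ b_i for all i} has exactly Δ = Σ_{i=1}^n (i - b_i) transpositions (i j) such that composing σ with (i j) (swapping the values in positions i and j) yields another element of S_M(b). In particular the graph on S_M(b) induced by the random transposition walk is regular of degree Δ. -/
open Finset

lemma aux_card_lt {n : ℕ} (σ : Equiv.Perm (Fin n)) (x : Fin n) :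
    (univ.filter fun i => σ i < x).card = x.val := by
  have h1 : (univ.filter fun i => σ i < x) = (univ.filter fun v => v < x).map σ.symm.toEmbedding := by
    ext i
    simp [Equiv.symm_apply_eq]
  rw [h1, card_map]
  have : (univ.filter fun v : Fin n => v < x) = Finset.Iio x := by
    ext v; simp
  rw [this, Fin.card_Iio]

/-- the transposition graph on permutations with one-sided
restrictions `σ i ≥ b i` (1-indexed) is regular of degree `Δ = Σ (i - b i)`. -/
theorem stmt0 (n : ℕ) (hn : 0 < n) (b : Fin n → ℕ)
    (hb1 : ∀ i, 1 ≤ b i) (hbn : ∀ i, b i ≤ n)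
    (hmono : Monotone b)
    (hbi : ∀ i : Fin n, b i ≤ i.val + 1)
    (σ : Equiv.Perm (Fin n)) (hσ : ∀ i, b i ≤ (σ i).val + 1) :
    (Finset.univ.filter (fun p : Fin n × Fin n =>
        p.1 < p.2 ∧ ∀ k, b k ≤ ((σ * Equiv.swap p.1 p.2) k).val + 1)).card
      = ∑ i : Fin n, (i.val + 1 - b i) := by
  -- Step 1: simplify the predicate
  have key : ∀ p : Fin n × Fin n,
      (p.1 < p.2 ∧ ∀ k, b k ≤ ((σ * Equiv.swap p.1 p.2) k).val + 1)
      ↔ (p.1 < p.2 ∧ b p.2 ≤ (σ p.1).val + 1) := by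
    rintro ⟨i, j⟩
    constructor
    · rintro ⟨hij, h⟩
      refine ⟨hij, ?_⟩
      have := h j
      simpa [Equiv.swap_apply_right] using this
    · rintro ⟨hij, h⟩
      refine ⟨hij, fun k => ?_⟩
      rcases eq_or_ne k i with rfl | hki
      · simp only [Equiv.Perm.mul_apply, Equiv.swap_apply_left]
        exact le_trans (hmono hij.le) (hσ j)
      rcases eq_or_ne k j with rfl | hkj
      · simpa [Equiv.swap_apply_right] using h
      · simp only [Equiv.Perm.mul_apply, Equiv.swap_apply_of_ne_of_ne hki hkj]
        exact hσ k
  rw [Finset.card_filter]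
  simp only [key]
  rw [Fintype.sum_prod_type_right]
  refine Finset.sum_congr rfl (fun j _ => ?_)
  rw [← Finset.card_filter]
  show (univ.filter fun i => i < j ∧ b j ≤ (σ i).val + 1).card = j.val + 1 - b j
  -- per-j count
  have hT : (univ.filter fun i => i < j ∧ b j ≤ (σ i).val + 1)
      ∪ (univ.filter fun i => (σ i).val + 1 < b j) = univ.filter fun i => i < j := by
    ext i
    simp only [mem_union, mem_filter, mem_univ, true_and]
    constructor
    · rintro (⟨h1, _⟩ | h2)
      · exact h1
      · by_contra hij
        push_neg at hij
        have : b j ≤ b i := hmono hij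
        have := hσ i
        omega
    · intro h1
      rcases le_or_gt (b j) ((σ i).val + 1) with h | h
      · exact Or.inl ⟨h1, h⟩
      · exact Or.inr h
  have hdisj : Disjoint (univ.filter fun i => i < j ∧ b j ≤ (σ i).val + 1)
      (univ.filter fun i => (σ i).val + 1 < b j) := by
    rw [Finset.disjoint_left]
    intro i hi hi'
    simp only [mem_filter] at hi hi'
    omega
  have hcardB : (univ.filter fun i => (σ i).val + 1 < b j).card = b j - 1 := by
    have hd : b j - 1 < n := by have := hbn j; have := hb1 j; have := j.isLt; have := hbi j; omega
    have : (univ.filter fun i => (σ i).val + 1 < b j)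
        = (univ.filter fun i => σ i < (⟨b j - 1, hd⟩ : Fin n)) := by
      apply Finset.filter_congr
      intro i _
      simp only [Fin.lt_def]
      have := hb1 j
      constructor <;> intro <;> omega
    rw [this, aux_card_lt]
  have hcardA : (univ.filter fun i => i < j).card = j.val := by
    have : (univ.filter fun i => i < j) = Finset.Iio j := by ext v; simp
    rw [this, Fin.card_Iio]
  have := Finset.card_union_of_disjoint hdisj
  rw [hT, hcardA, hcardB] at this
  have := hb1 j
  have := hbi j
  omega
end

section
/- Let n ≥ 1 and let x ≥ y ≥ 0 be integers with y ≤ x ≤ n. Let a = (a_1, ..., a_n) where a_i = 1 for i ≤ x and a_i = y + 1 for i > x. Then the number of permutations σ of {1, ..., n} with σ(i) ≥ a_i for all i equals x! · (n − y)! / (x − y)!. -/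
open Function

lemma card_perm_extend {m : ℕ} (p : Fin m → Prop) [DecidablePred p]
    (f : {i // p i} → Fin m) (hf : Function.Injective f) :
    Fintype.card {σ : Equiv.Perm (Fin m) // ∀ i : {i // p i}, σ i.1 = f i} =
      (Fintype.card {i // ¬ p i}).factorial := by
  classical
  have hcr : Fintype.card {j // j ∈ Set.range f} = Fintype.card {i // p i} :=
    (Fintype.card_congr (Equiv.ofInjective f hf)).symm
  have hcard : Fintype.card {i // ¬ p i} = Fintype.card {j : Fin m // j ∉ Set.range f} := by
    have h1 : Fintype.card {i // ¬ p i} = m - Fintype.card {i // p i} := by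
      rw [Fintype.card_subtype_compl, Fintype.card_fin]
    have h2 : Fintype.card {j : Fin m // j ∉ Set.range f} =
        m - Fintype.card {j // j ∈ Set.range f} := by
      rw [Fintype.card_subtype_compl, Fintype.card_fin]
    rw [h1, h2, hcr]
  -- restriction map
  have restr_mem : ∀ (σ : {σ : Equiv.Perm (Fin m) // ∀ i : {i // p i}, σ i.1 = f i})
      (i : {i // ¬ p i}), (σ.1 i.1) ∉ Set.range f := by
    rintro σ i ⟨j, hj⟩
    apply i.2
    have h : σ.1 j.1 = σ.1 i.1 := by rw [σ.2 j, hj]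
    have := σ.1.injective h
    rw [← this]; exact j.2
  let restr : {σ : Equiv.Perm (Fin m) // ∀ i : {i // p i}, σ i.1 = f i} →
      ({i // ¬ p i} → {j : Fin m // j ∉ Set.range f}) :=
    fun σ i => ⟨σ.1 i.1, restr_mem σ i⟩
  have restr_bij : ∀ σ, Function.Bijective (restr σ) := by
    intro σ
    rw [Fintype.bijective_iff_injective_and_card]
    refine ⟨fun i j h => Subtype.ext (σ.1.injective (congrArg Subtype.val h)), hcard⟩
  -- gluing
  have glue_inj : ∀ (E : {i // ¬ p i} → {j : Fin m // j ∉ Set.range f}),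
      Function.Injective E → Function.Injective
        (fun i : Fin m => if h : p i then f ⟨i, h⟩ else (E ⟨i, h⟩).1) := by
    intro E hE i j hij
    dsimp only at hij
    split_ifs at hij with h1 h2 h2
    · have := hf (show f ⟨i,h1⟩ = f ⟨j,h2⟩ from hij)
      exact congrArg Subtype.val this
    · exact absurd ⟨⟨i, h1⟩, hij⟩ (E ⟨j, h2⟩).2
    · exact absurd ⟨⟨j, h2⟩, hij.symm⟩ (E ⟨i, h1⟩).2
    · exact congrArg Subtype.val (hE (Subtype.ext hij))
  let E : {σ : Equiv.Perm (Fin m) // ∀ i : {i // p i}, σ i.1 = f i} ≃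
      ({i // ¬ p i} ≃ {j : Fin m // j ∉ Set.range f}) :=
    { toFun := fun σ => Equiv.ofBijective (restr σ) (restr_bij σ)
      invFun := fun e =>
        ⟨Equiv.ofBijective _ (Finite.injective_iff_bijective.mp (glue_inj e e.injective)),
          fun i => by simp [Equiv.ofBijective_apply, dif_pos i.2]⟩
      left_inv := by
        intro σ
        apply Subtype.ext
        apply Equiv.ext
        intro i
        by_cases h : p i
        · simpa [dif_pos h] using (σ.2 ⟨i, h⟩).symm
        · simp [dif_neg h, restr]
      right_inv := by
        intro e
        apply Equiv.ext
        intro i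
        apply Subtype.ext
        simp [restr, dif_neg i.2] }
  rw [Fintype.card_congr E, Fintype.card_equiv (Fintype.equivOfCardEq hcard)]

open Function

lemma card_fin_subtype_le {n c : ℕ} (h : c ≤ n) :
    Fintype.card {i : Fin n // c ≤ i.val} = n - c := by
  have e : Fin (n - c) ≃ {i : Fin n // c ≤ i.val} :=
    { toFun := fun j => ⟨⟨j.1 + c, by omega⟩, by simp⟩
      invFun := fun i => ⟨i.1.1 - c, by omega⟩
      left_inv := fun j => by ext; simp
      right_inv := fun i => by ext; have := i.2; simp; omega }
  rw [← Fintype.card_congr e, Fintype.card_fin]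

/-- counting permutations with a two-step one-sided restriction. -/
theorem stmt1 (n x y : ℕ) (hn : 1 ≤ n) (hyx : y ≤ x) (hxn : x ≤ n)
    (a : Fin n → ℕ) (ha : ∀ i : Fin n, a i = if i.val + 1 ≤ x then 1 else y + 1) :
    Set.ncard {σ : Equiv.Perm (Fin n) | ∀ i, a i ≤ (σ i).val + 1}
      = Nat.factorial x * Nat.factorial (n - y) / Nat.factorial (x - y) := by
  classical
  -- rewrite the defining condition
  have hset : {σ : Equiv.Perm (Fin n) | ∀ i, a i ≤ (σ i).val + 1} =
      {σ : Equiv.Perm (Fin n) | ∀ i : Fin n, x ≤ i.val → y ≤ (σ i).val} := by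
    ext σ
    simp only [Set.mem_setOf_eq, ha]
    constructor
    · intro h i hi
      have := h i
      rw [if_neg (by omega)] at this
      omega
    · intro h i
      by_cases hc : i.val + 1 ≤ x
      · rw [if_pos hc]; omega
      · rw [if_neg hc]
        have := h i (by omega)
        omega
  rw [hset, ← Nat.card_coe_set_eq, Nat.card_eq_fintype_card]
  -- subtypes
  set S := {i : Fin n // x ≤ i.val} with hS
  -- the restriction map into "valid partial injections"
  set B := {f : S → Fin n // Function.Injective f ∧ ∀ i : S, y ≤ (f i).val} with hB
  let A := {σ : Equiv.Perm (Fin n) // ∀ i : Fin n, x ≤ i.val → y ≤ (σ i).val}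
  let φ : A → B := fun σ =>
    ⟨fun i => σ.1 i.1,
     ⟨fun i j h => Subtype.ext (σ.1.injective h), fun i => σ.2 i.1 i.2⟩⟩
  have hAcard : Fintype.card A = ∑ f : B, Fintype.card {σ : A // φ σ = f} := by
    rw [← Fintype.card_sigma, Fintype.card_congr (Equiv.sigmaFiberEquiv φ)]
  -- each fiber has x! elements
  have hfiber : ∀ f : B, Fintype.card {σ : A // φ σ = f} = Nat.factorial x := by
    intro f
    have e : {σ : A // φ σ = f} ≃
        {σ : Equiv.Perm (Fin n) // ∀ i : S, σ i.1 = f.1 i} :=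
      { toFun := fun σ => ⟨σ.1.1, fun i => by
          have := congrArg Subtype.val σ.2
          exact congrFun this i⟩
        invFun := fun σ => ⟨⟨σ.1, fun i hi => by
            rw [σ.2 ⟨i, hi⟩]; exact f.2.2 ⟨i, hi⟩⟩,
          Subtype.ext (funext fun i => σ.2 i)⟩
        left_inv := fun σ => by ext; rfl
        right_inv := fun σ => by ext; rfl }
    rw [Fintype.card_congr e,
      card_perm_extend (fun i : Fin n => x ≤ i.val) f.1 f.2.1]
    congr 1
    have : Fintype.card {i : Fin n // ¬ x ≤ i.val} =
        n - Fintype.card {i : Fin n // x ≤ i.val} := by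
      rw [Fintype.card_subtype_compl, Fintype.card_fin]
    rw [this, card_fin_subtype_le hxn]
    omega
  -- number of valid partial injections
  have hBcard : Fintype.card B = (n - y).descFactorial (n - x) := by
    have e : B ≃ (S ↪ {j : Fin n // y ≤ j.val}) :=
      { toFun := fun g => ⟨fun i => ⟨g.1 i, g.2.2 i⟩,
          fun i j h => g.2.1 (congrArg Subtype.val h)⟩
        invFun := fun g => ⟨fun i => (g i).1,
          ⟨fun i j h => g.injective (Subtype.ext h), fun i => (g i).2⟩⟩
        left_inv := fun g => by ext; rfl
        right_inv := fun g => by ext i; rfl }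
    rw [Fintype.card_congr e, Fintype.card_embedding_eq,
      card_fin_subtype_le hxn, card_fin_subtype_le (le_trans hyx hxn)]
  rw [show (Fintype.card ↑{σ : Equiv.Perm (Fin n) | ∀ i : Fin n, x ≤ i.val → y ≤ (σ i).val})
      = Fintype.card A from Fintype.card_congr (Equiv.subtypeEquivRight fun σ => Iff.rfl),
    hAcard]
  simp only [hfiber, Finset.sum_const, smul_eq_mul, Finset.card_univ, hBcard]
  rw [Nat.descFactorial_eq_div (by omega)]
  have h1 : n - y - (n - x) = x - y := by omega
  rw [h1, Nat.mul_div_assoc _ (Nat.factorial_dvd_factorial (by omega)), mul_comm]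
end

section
/- Let λ be a partition of l and μ a partition of m with μ ⊆ λ. Suppose l − λ_1 = i and m − μ_1 = j, where λ_1 and μ_1 denote the largest parts. Then C(λ) − C(μ) ≤ (l² − l)/2 − (m² − m)/2 − i(l − i + 1) + j(m − j + 1), where C(ν) denotes the sum over all boxes x of ν of the content of x. -/
/-- The sum of the contents of the cells of a Young diagram
(the content of the cell in row `a`, column `b`, 0-indexed, is `b - a`). -/
def contentSum (nu : YoungDiagram) : ℤ := ∑ p ∈ nu.cells, ((p.2 : ℤ) - p.1)

/-- Potential function. -/
noncomputable def Hpot (nu : YoungDiagram) : ℚ :=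
  ((nu.card : ℚ)^2 - nu.card)/2 - ((nu.card : ℚ) - nu.rowLen 0) * ((nu.rowLen 0 : ℚ) + 1)
    - (contentSum nu : ℚ)

lemma rowLen_zero_le_card (mu : YoungDiagram) : mu.rowLen 0 ≤ mu.card := by
  rw [YoungDiagram.rowLen_eq_card]
  exact Finset.card_le_card (by intro x hx; exact (YoungDiagram.mem_row_iff.mp hx).1)

lemma step (mu nu : YoungDiagram) (a b : ℕ) (hx : (a, b) ∉ mu)
    (hcells : nu.cells = insert (a, b) mu.cells) : Hpot mu ≤ Hpot nu := by
  have hxnu : (a, b) ∈ nu := by rw [← YoungDiagram.mem_cells, hcells]; exact Finset.mem_insert_self _ _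
  have hcard : nu.card = mu.card + 1 := by
    rw [YoungDiagram.card, hcells, Finset.card_insert_of_notMem hx]
  have hcontent : (contentSum nu : ℚ) = contentSum mu + ((b : ℚ) - a) := by
    have : contentSum nu = contentSum mu + ((b : ℤ) - a) := by
      rw [contentSum, contentSum, hcells, Finset.sum_insert hx]; ring
    rw [this]; push_cast; ring
  have hrowmem : ∀ b' < b, (a, b') ∈ mu := by
    intro b' hb'
    have h1 : (a, b') ∈ nu := nu.up_left_mem le_rfl hb'.le hxnu
    rw [← YoungDiagram.mem_cells, hcells, Finset.mem_insert] at h1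
    rcases h1 with h | h
    · exact absurd (Prod.mk.injEq .. ▸ h) (by simp [Nat.ne_of_lt hb'])
    · exact h
  rcases Nat.eq_zero_or_pos a with rfl | ha
  · -- a = 0 : H unchanged
    have hr : mu.rowLen 0 = b := by
      have h1 : ¬ (b < mu.rowLen 0) := fun h => hx (YoungDiagram.mem_iff_lt_rowLen.mpr h)
      rcases Nat.lt_or_ge b (mu.rowLen 0) with h | h
      · exact absurd h h1
      · rcases Nat.eq_or_lt_of_le h with h2 | h2
        · exact h2
        · exact absurd (YoungDiagram.mem_iff_lt_rowLen.mp (hrowmem _ h2)) (by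
            rw [YoungDiagram.mem_iff_lt_rowLen] at *
            omega)
    have hrnu : nu.rowLen 0 = b + 1 := by
      have h1 : b < nu.rowLen 0 := YoungDiagram.mem_iff_lt_rowLen.mp hxnu
      have h2 : (0, b + 1) ∉ nu := by
        rw [← YoungDiagram.mem_cells, hcells, Finset.mem_insert]
        rintro (h | h)
        · simp at h
        · exact hx (mu.up_left_mem le_rfl (by omega) h)
      rw [YoungDiagram.mem_iff_lt_rowLen] at h2
      omega
    rw [Hpot, Hpot, hcard, hr, hrnu, hcontent]
    push_cast
    ring_nf
    norm_num
  · -- a ≥ 1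
    have hrnu : nu.rowLen 0 = mu.rowLen 0 := by
      have hmem : ∀ c, (0, c) ∈ nu ↔ (0, c) ∈ mu := by
        intro c
        rw [← YoungDiagram.mem_cells, hcells, Finset.mem_insert]
        constructor
        · rintro (h | h)
          · exact absurd (congrArg Prod.fst h) (by simp; omega)
          · exact h
        · exact fun h => Or.inr h
      rcases Nat.lt_trichotomy (nu.rowLen 0) (mu.rowLen 0) with h | h | h
      · exact absurd (YoungDiagram.mem_iff_lt_rowLen.mp ((hmem _).mpr
          (YoungDiagram.mem_iff_lt_rowLen.mpr h))) (by omega)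
      · exact h
      · exact absurd (YoungDiagram.mem_iff_lt_rowLen.mp ((hmem _).mp
          (YoungDiagram.mem_iff_lt_rowLen.mpr h))) (by omega)
    -- b ≤ mu.card - mu.rowLen 0
    have hb : b + mu.rowLen 0 ≤ mu.card := by
      have hsub : (Finset.range b).image (fun b' => (a, b')) ∪ mu.row 0 ⊆ mu.cells := by
        intro x hxm
        rcases Finset.mem_union.mp hxm with h | h
        · obtain ⟨b', hb', rfl⟩ := Finset.mem_image.mp h
          exact hrowmem _ (Finset.mem_range.mp hb')
        · exact (YoungDiagram.mem_row_iff.mp h).1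
      have hdisj : Disjoint ((Finset.range b).image (fun b' => (a, b'))) (mu.row 0) := by
        rw [Finset.disjoint_left]
        intro x h1 h2
        obtain ⟨b', _, rfl⟩ := Finset.mem_image.mp h1
        have := (YoungDiagram.mem_row_iff.mp h2).2
        simp at this; omega
      have := Finset.card_le_card hsub
      rwa [Finset.card_union_of_disjoint hdisj, Finset.card_image_of_injective _
        (fun x y h => by simpa using h), Finset.card_range, ← YoungDiagram.rowLen_eq_card] at this
    have hrle := rowLen_zero_le_card mu
    rw [Hpot, Hpot, hcard, hrnu, hcontent]
    have hbq : (b : ℚ) ≤ (mu.card : ℚ) - mu.rowLen 0 := by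
      have : (b : ℚ) + mu.rowLen 0 ≤ mu.card := by exact_mod_cast hb
      linarith
    have haq : (1 : ℚ) ≤ a := by exact_mod_cast ha
    push_cast
    nlinarith [hbq, haq]

lemma mono : ∀ k (mu lam : YoungDiagram), (lam.cells \ mu.cells).card = k → mu ≤ lam →
    Hpot mu ≤ Hpot lam := by
  intro k
  induction k with
  | zero =>
    intro mu lam hk hle
    have : lam.cells ⊆ mu.cells := by
      intro x hxl
      by_contra hxm
      have : x ∈ lam.cells \ mu.cells := Finset.mem_sdiff.mpr ⟨hxl, hxm⟩
      rw [Finset.card_eq_zero.mp hk] at this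
      simp at this
    have : mu = lam := by
      ext x
      exact ⟨fun h => hle h, fun h => this h⟩
    rw [this]
  | succ n ih =>
    intro mu lam hk hle
    have hne : (lam.cells \ mu.cells).Nonempty := by
      rw [← Finset.card_pos, hk]; omega
    obtain ⟨x, hxmem, hmin⟩ := Finset.exists_min_image _ (fun p => p.1 + p.2) hne
    obtain ⟨hxl, hxm⟩ := Finset.mem_sdiff.mp hxmem
    have hlower : IsLowerSet (↑(insert x mu.cells) : Set (ℕ × ℕ)) := by
      intro y z hzy hy
      simp only [Finset.coe_insert, Set.mem_insert_iff, Finset.mem_coe] at hy ⊢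
      rcases hy with rfl | hy
      · by_cases hzx : z = y
        · exact Or.inl hzx
        · right
          have hzlam : z ∈ lam := lam.isLowerSet hzy hxl
          by_contra hzm
          have hzmem : z ∈ lam.cells \ mu.cells := Finset.mem_sdiff.mpr ⟨hzlam, hzm⟩
          have := hmin z hzmem
          have h1 : z.1 ≤ y.1 := hzy.1
          have h2 : z.2 ≤ y.2 := hzy.2
          have : z.1 + z.2 < y.1 + y.2 := by
            rcases Nat.lt_or_ge z.1 y.1 with h | h
            · omega
            · have : z.1 = y.1 := le_antisymm h1 h
              rcases Nat.lt_or_ge z.2 y.2 with h' | h'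
              · omega
              · exact absurd (Prod.ext this (le_antisymm h2 h')) hzx
          omega
      · exact Or.inr (mu.isLowerSet hzy hy)
    set nu : YoungDiagram := ⟨insert x mu.cells, hlower⟩ with hnu
    have h1 : Hpot mu ≤ Hpot nu := step mu nu x.1 x.2 hxm rfl
    have h2 : Hpot nu ≤ Hpot lam := by
      apply ih nu lam
      · rw [hnu]
        have : lam.cells \ insert x mu.cells = (lam.cells \ mu.cells).erase x := by
          ext y; simp [Finset.mem_sdiff, Finset.mem_erase]; tauto
        show (lam.cells \ insert x mu.cells).card = n
        rw [this, Finset.card_erase_of_mem hxmem, hk]; omega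
      · intro y hy
        rw [hnu] at hy
        rcases Finset.mem_insert.mp hy with rfl | hy
        · exact hxl
        · exact hle hy
    exact h1.trans h2

/-- bound on the content sum of a skew shape in terms of the
sizes and largest parts. -/
theorem stmt5 (lam mu : YoungDiagram) (l m i j : ℕ)
    (hsub : mu ≤ lam) (hl : lam.card = l) (hm : mu.card = m)
    (hi : lam.rowLen 0 + i = l) (hj : mu.rowLen 0 + j = m) :
    ((contentSum lam - contentSum mu : ℤ) : ℚ)
      ≤ ((l:ℚ)^2 - l)/2 - ((m:ℚ)^2 - m)/2
        - i*((l:ℚ) - i + 1) + j*((m:ℚ) - j + 1) := by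
  have h := mono _ mu lam rfl hsub
  rw [Hpot, Hpot, hl, hm] at h
  have hiq : (lam.rowLen 0 : ℚ) = (l : ℚ) - i := by
    have : ((lam.rowLen 0 + i : ℕ) : ℚ) = l := by rw [hi]
    push_cast at this; linarith
  have hjq : (mu.rowLen 0 : ℚ) = (m : ℚ) - j := by
    have : ((mu.rowLen 0 + j : ℕ) : ℚ) = m := by rw [hj]
    push_cast at this; linarith
  rw [hiq, hjq] at h
  push_cast
  linarith
end

section
/- Let λ be a partition of l with largest part λ_1 = l − i. If i ≥ l/2, then C(λ) ≤ (l² − l)/2 − i·l/2, where C(λ) is the sum of the contents of the boxes of λ. -/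
lemma cells_eq_biUnion (μ : YoungDiagram) :
    μ.cells = (Finset.range (μ.colLen 0)).biUnion μ.row := by
  ext ⟨a, b⟩
  simp only [Finset.mem_biUnion, Finset.mem_range, YoungDiagram.mem_row_iff,
    YoungDiagram.mem_cells]
  constructor
  · intro h
    exact ⟨a, YoungDiagram.mem_iff_lt_colLen.mp (μ.up_left_mem le_rfl (Nat.zero_le b) h),
      h, rfl⟩
  · rintro ⟨a', _, h, rfl⟩
    exact h

lemma rowSum_eq (μ : YoungDiagram) (a : ℕ) :
    2 * ∑ p ∈ μ.row a, ((p.2 : ℤ) - p.1)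
      = (μ.rowLen a : ℤ) * (μ.rowLen a - 1) - 2 * a * μ.rowLen a := by
  rw [YoungDiagram.row_eq_prod, Finset.sum_product, Finset.sum_singleton]
  simp only
  rw [Finset.sum_sub_distrib, Finset.sum_const, Finset.card_range]
  have : (∑ x ∈ Finset.range (μ.rowLen a), (x : ℤ)) * 2
      = (μ.rowLen a : ℤ) * (μ.rowLen a - 1) := by
    have := Finset.sum_range_id_mul_two (μ.rowLen a)
    have h2 : ((∑ i ∈ Finset.range (μ.rowLen a), i) * 2 : ℕ) = μ.rowLen a * (μ.rowLen a - 1) := this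
    rcases Nat.eq_zero_or_pos (μ.rowLen a) with h | h
    · simp [h]
    · have := congrArg (Nat.cast : ℕ → ℤ) h2
      push_cast [Nat.cast_sub h] at this
      linarith
  simp only [nsmul_eq_mul]
  push_cast
  linear_combination this

lemma rows_disjoint (μ : YoungDiagram) :
    (↑(Finset.range (μ.colLen 0)) : Set ℕ).PairwiseDisjoint μ.row := by
  intro x _ y _ hxy
  simp only [Finset.disjoint_left, YoungDiagram.mem_row_iff]
  rintro ⟨a, b⟩ ⟨_, rfl⟩ ⟨_, h⟩
  exact hxy (h ▸ rfl)

lemma key (μ : YoungDiagram) :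
    2 * contentSum μ ≤ (μ.card : ℤ) * (μ.rowLen 0 - 1) := by
  have hcard : (μ.card : ℤ) = ∑ a ∈ Finset.range (μ.colLen 0), (μ.rowLen a : ℤ) := by
    rw [YoungDiagram.card, cells_eq_biUnion, Finset.card_biUnion]
    · push_cast
      exact Finset.sum_congr rfl fun a _ => by rw [YoungDiagram.rowLen_eq_card]
    · exact fun x hx y hy h => rows_disjoint μ hx hy h
  have hsum : contentSum μ
      = ∑ a ∈ Finset.range (μ.colLen 0), ∑ p ∈ μ.row a, ((p.2 : ℤ) - p.1) := by
    rw [contentSum, cells_eq_biUnion, Finset.sum_biUnion (rows_disjoint μ)]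
  rw [hsum, Finset.mul_sum, hcard, Finset.sum_mul]
  apply Finset.sum_le_sum
  intro a _
  rw [rowSum_eq]
  have hle : (μ.rowLen a : ℤ) ≤ μ.rowLen 0 := by
    exact_mod_cast μ.rowLen_anti 0 a (Nat.zero_le a)
  have h0 : (0:ℤ) ≤ μ.rowLen a := Int.natCast_nonneg _
  have ha : (0:ℤ) ≤ (a:ℤ) := Int.natCast_nonneg _
  nlinarith

/-- if the largest part of `λ ⊢ l` is `l - i` and `i ≥ l/2`, then
`C(λ) ≤ (l² - l)/2 - i l / 2`. -/
theorem stmt7 (lam : YoungDiagram) (l i : ℕ)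
    (hl : lam.card = l) (h1 : lam.rowLen 0 + i = l) (hi : l ≤ 2*i) :
    ((contentSum lam : ℤ) : ℚ) ≤ ((l:ℚ)^2 - l)/2 - (i:ℚ)*l/2 := by
  have h := key lam
  have hL : (lam.rowLen 0 : ℚ) = (l : ℚ) - i := by
    have := congrArg (Nat.cast : ℕ → ℚ) h1
    push_cast at this
    linarith
  have h' : (2 : ℚ) * (contentSum lam : ℚ) ≤ (l : ℚ) * ((lam.rowLen 0 : ℚ) - 1) := by
    have := (Int.cast_le (R := ℚ)).mpr h
    push_cast [hl] at this ⊢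
    convert this using 2 <;> push_cast <;> ring_nf
  rw [hL] at h'
  linarith
end

section
/- Let n, f, g be positive integers with g ≤ f ≤ n. Let S_M = {σ ∈ S_n : σ(i) ≥ g + 1 for all i > f}. Then for any π, σ ∈ S_M there exist permutations α, β ∈ S_n, with α fixing every point of {1, ..., g} and β fixing every point of {f+1, ..., n}, such that α ∘ π ∘ β = σ. Moreover for any such α, β, the map τ ↦ α ∘ τ ∘ β maps S_M bijectively to itself and maps pairs differing by a left-multiplied transposition to pairs differing by a left-multiplied transposition; hence the transposition graph on S_M is vertex transitive. -/
/-!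
Write `s` for the positions `{i | f ≤ i}` and `t` for the values `{i | g ≤ i}`, so that `S_M` is
the set of permutations mapping `s` into `t`. For `π, σ ∈ S_M` both `σ⁻¹` and `π⁻¹` send the
values outside `t` injectively to positions outside `s`, so some `β` supported off `s` carries the
first injection to the second; then `α = σ β⁻¹ π⁻¹` fixes every value outside `t`. Conversely,
`α` fixing `tᶜ` pointwise preserves `t`, so `τ ↦ α τ β` and its inverse `τ ↦ α⁻¹ τ β⁻¹` preserve
`S_M`, and `α (i j) τ β = (α i  α j) α τ β`.
-/

open Equiv Set Function

namespace Equiv.Perm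

variable {α : Type*}

def mapsToPerms (s t : Set α) : Set (Perm α) := {σ | MapsTo σ s t}

theorem exists_extending_pair_of_mapsTo {ι : Type*} [Finite ι] {u : Set α} (f g : ι → α)
    (hf : Injective f) (hg : Injective g) (hfu : ∀ i, f i ∈ u) (hgu : ∀ i, g i ∈ u) :
    ∃ β : Perm α, (∀ x ∉ u, β x = x) ∧ ∀ i, β (f i) = g i := by
  classical
  obtain ⟨γ, hγ⟩ := exists_extending_pair (u.codRestrict f hfu) (u.codRestrict g hgu)
    (hf.codRestrict hfu) (hg.codRestrict hgu)
  refine ⟨ofSubtype γ, fun x hx => ofSubtype_apply_of_not_mem γ hx, fun i => ?_⟩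
  rw [ofSubtype_apply_of_mem γ (hfu i)]
  exact congrArg Subtype.val (hγ i)

variable {s t : Set α}

theorem mapsTo_inv_compl_of_mem_mapsToPerms {σ : Perm α} (hσ : σ ∈ mapsToPerms s t) :
    MapsTo (⇑σ⁻¹) tᶜ sᶜ := fun y hy hs => hy (by simpa using hσ hs)

theorem exists_mul_mul_eq_of_mem_mapsToPerms [Finite ↥tᶜ] {π σ : Perm α}
    (hπ : π ∈ mapsToPerms s t) (hσ : σ ∈ mapsToPerms s t) :
    ∃ a b : Perm α, (∀ x ∉ t, a x = x) ∧ (∀ x ∈ s, b x = x) ∧ a * π * b = σ := by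
  obtain ⟨b, hbs, hb⟩ := exists_extending_pair_of_mapsTo (ι := ↥tᶜ) (u := sᶜ)
    (fun y => σ⁻¹ y) (fun y => π⁻¹ y) (σ⁻¹.injective.comp Subtype.val_injective)
    (π⁻¹.injective.comp Subtype.val_injective)
    (fun y => mapsTo_inv_compl_of_mem_mapsToPerms hσ y.2)
    (fun y => mapsTo_inv_compl_of_mem_mapsToPerms hπ y.2)
  refine ⟨σ * b⁻¹ * π⁻¹, b, fun x hx => ?_, fun x hx => hbs x (not_not_intro hx), by group⟩
  have hbx : b⁻¹ (π⁻¹ x) = σ⁻¹ x := inv_eq_iff_eq.mpr (hb ⟨x, hx⟩).symm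
  rw [mul_apply, mul_apply, hbx]
  exact σ.apply_symm_apply x

theorem mul_mul_mem_mapsToPerms {a b τ : Perm α} (ha : ∀ x ∉ t, a x = x)
    (hb : ∀ x ∈ s, b x = x) (hτ : τ ∈ mapsToPerms s t) : a * τ * b ∈ mapsToPerms s t := by
  intro x hx
  have hat : ∀ y ∈ t, a y ∈ t := fun y hy =>
    by_contra fun hay => hay (by rwa [a.injective (ha _ hay)])
  simpa only [mul_apply, hb x hx] using hat _ (hτ hx)

theorem bijOn_mul_mul_mapsToPerms {a b : Perm α} (ha : ∀ x ∉ t, a x = x)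
    (hb : ∀ x ∈ s, b x = x) :
    BijOn (fun τ => a * τ * b) (mapsToPerms s t) (mapsToPerms s t) := by
  have ha' : ∀ x ∉ t, a⁻¹ x = x := fun x hx => inv_eq_iff_eq.mpr (ha x hx).symm
  have hb' : ∀ x ∈ s, b⁻¹ x = x := fun x hx => inv_eq_iff_eq.mpr (hb x hx).symm
  refine InvOn.bijOn (f' := fun τ => a⁻¹ * τ * b⁻¹) ⟨fun τ _ => ?_, fun τ _ => ?_⟩
    (fun _ => mul_mul_mem_mapsToPerms ha hb) (fun _ => mul_mul_mem_mapsToPerms ha' hb')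
  all_goals group

theorem mul_swap_mul_mul (a b τ : Perm α) [DecidableEq α] (i j : α) :
    a * (swap i j * τ) * b = swap (a i) (a j) * (a * τ * b) := by
  rw [← mul_assoc a, mul_swap_eq_swap_mul]
  group

end Equiv.Perm

open Equiv.Perm in
theorem stmt10_general (n f g : ℕ)
    (SM : Set (Equiv.Perm (Fin n)))
    (hSM : SM = {σ : Equiv.Perm (Fin n) | ∀ i : Fin n, f ≤ i.val → g ≤ (σ i).val})
    (π σ : Equiv.Perm (Fin n)) (hπ : π ∈ SM) (hσ : σ ∈ SM) :
    (∃ α β : Equiv.Perm (Fin n),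
      (∀ i : Fin n, i.val < g → α i = i) ∧
      (∀ i : Fin n, f ≤ i.val → β i = i) ∧
      α * π * β = σ) ∧
    (∀ α β : Equiv.Perm (Fin n),
      (∀ i : Fin n, i.val < g → α i = i) →
      (∀ i : Fin n, f ≤ i.val → β i = i) →
      Set.BijOn (fun τ => α * τ * β) SM SM ∧
      (∀ τ₁ τ₂ : Equiv.Perm (Fin n), τ₁ ∈ SM → τ₂ ∈ SM →
        ∀ i j : Fin n, i ≠ j → τ₂ = Equiv.swap i j * τ₁ →
          ∃ i' j' : Fin n, i' ≠ j' ∧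
            α * τ₂ * β = Equiv.swap i' j' * (α * τ₁ * β))) := by
  change SM = mapsToPerms {i | f ≤ i.val} {i | g ≤ i.val} at hSM
  subst hSM
  refine ⟨?_, fun α β hα hβ => ⟨?_, ?_⟩⟩
  · obtain ⟨a, b, ha, hb, hab⟩ := exists_mul_mul_eq_of_mem_mapsToPerms hπ hσ
    exact ⟨a, b, fun i hi => ha i (not_le.mpr hi), hb, hab⟩
  · exact bijOn_mul_mul_mapsToPerms (fun i hi => hα i (not_le.mp hi)) hβ
  · rintro τ₁ _ - - i j hij rfl
    exact ⟨α i, α j, α.injective.ne hij, mul_swap_mul_mul α β τ₁ i j⟩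

/-- vertex transitivity of the transposition graph on
`S_M = {σ : σ(i) ≥ g+1 for all i > f}` (1-indexed; here `Fin n` is 0-indexed,
so `i > f` reads `f ≤ i.val` and `σ(i) ≥ g+1` reads `g ≤ (σ i).val`). -/
theorem stmt10 (n f g : ℕ) (hn : 0 < n) (hf : 0 < f) (hg : 0 < g)
    (hgf : g ≤ f) (hfn : f ≤ n)
    (SM : Set (Equiv.Perm (Fin n)))
    (hSM : SM = {σ : Equiv.Perm (Fin n) | ∀ i : Fin n, f ≤ i.val → g ≤ (σ i).val})
    (π σ : Equiv.Perm (Fin n)) (hπ : π ∈ SM) (hσ : σ ∈ SM) :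
    (∃ α β : Equiv.Perm (Fin n),
      (∀ i : Fin n, i.val < g → α i = i) ∧
      (∀ i : Fin n, f ≤ i.val → β i = i) ∧
      α * π * β = σ) ∧
    (∀ α β : Equiv.Perm (Fin n),
      (∀ i : Fin n, i.val < g → α i = i) →
      (∀ i : Fin n, f ≤ i.val → β i = i) →
      Set.BijOn (fun τ => α * τ * β) SM SM ∧
      (∀ τ₁ τ₂ : Equiv.Perm (Fin n), τ₁ ∈ SM → τ₂ ∈ SM →
        ∀ i j : Fin n, i ≠ j → τ₂ = Equiv.swap i j * τ₁ →
          ∃ i' j' : Fin n, i' ≠ j' ∧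
            α * τ₂ * β = Equiv.swap i' j' * (α * τ₁ * β))) :=
  stmt10_general n f g SM hSM π σ hπ hσ
end

section
/- Let n, f, g be integers with 1 ≤ g ≤ f ≤ n, and S_M = {σ ∈ S_n : σ(i) ≥ g+1 for all i > f}. Then the number of σ ∈ S_M having at least one fixed point in {1, ..., g} is |S_M| · Σ_{k=1}^{g} (−1)^{k+1} · binom(g, k) · (f − k)!/f!. -/
/-!
A permutation `σ` of `Fin n` with `σ i ≥ g` for `i ≥ f` restricts to an embedding of the
`(n - f)`-set `{i ≥ f}` into the `(n - g)`-set `{i ≥ g}`, and each such embedding extends to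
exactly `f!` permutations: those of the complement of its domain. If moreover a set `T` of `k`
points below `g` has to be fixed, these points can be removed from the ambient type, which
leaves `(f - k)!` extensions. So the number of elements of `S_M` fixing a given `k`-subset of
`{i < g}` is `|S_M| (f - k)! / f!`, depending on the subset only through `k`, and
inclusion–exclusion over the possible fixed points gives the formula.
-/

open Finset Function

namespace Equiv.Perm

variable {α : Type*} [Fintype α] [DecidableEq α] {p q : α → Prop} [DecidablePred p]
  [DecidablePred q]

theorem card_extending_embedding (e : {a // p a} ↪ α) :
    Fintype.card {σ : Perm α // ∀ a : {a // p a}, σ a = e a}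
      = (Fintype.card α - Fintype.card {a // p a}).factorial := by
  obtain ⟨σ₀, hσ₀⟩ := exists_extending_pair Subtype.val e Subtype.val_injective e.injective
  calc Fintype.card {σ : Perm α // ∀ a : {a // p a}, σ a = e a}
      = Fintype.card {τ : Perm α // ∀ a, ¬¬p a → τ a = a} :=
        Fintype.card_congr <| (Equiv.mulLeft σ₀⁻¹).subtypeEquiv fun σ => by
          simp [Equiv.symm_apply_eq, ← hσ₀]
    _ = Fintype.card (Perm {a // ¬p a}) :=
        Fintype.card_congr (Perm.subtypeEquivSubtypePerm _).symm
    _ = _ := by rw [Fintype.card_perm, Fintype.card_subtype_compl]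

theorem card_mapsTo :
    Fintype.card {σ : Perm α // ∀ a, p a → q (σ a)}
      = (Fintype.card {a // q a}).descFactorial (Fintype.card {a // p a})
        * (Fintype.card α - Fintype.card {a // p a}).factorial := by
  let restrict : {σ : Perm α // ∀ a, p a → q (σ a)} ≃ Σ e : {a // p a} ↪ {a // q a},
      {σ : Perm α // ∀ a : {a // p a}, σ a = (e.trans (Embedding.subtype q)) a} :=
    { toFun σ := ⟨⟨fun a => ⟨σ.1 a, σ.2 a a.2⟩,
          fun a b h => Subtype.ext (σ.1.injective (congrArg Subtype.val h))⟩, σ.1, fun _ => rfl⟩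
      invFun x := ⟨x.2.1, fun a ha => x.2.2 ⟨a, ha⟩ ▸ (x.1 ⟨a, ha⟩).2⟩
      left_inv _ := rfl
      right_inv x := Sigma.subtype_ext (Embedding.ext fun a => Subtype.ext (x.2.2 a)) rfl }
  simp only [Fintype.card_congr restrict, Fintype.card_sigma, card_extending_embedding, sum_const,
    card_univ, Fintype.card_embedding_eq, smul_eq_mul]

theorem card_mapsTo_fixing (T : Finset α) (hTp : ∀ a ∈ T, ¬p a) (hTq : ∀ a ∈ T, ¬q a) :
    Fintype.card {σ : Perm α // (∀ a, p a → q (σ a)) ∧ ∀ a ∈ T, σ a = a}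
      = (Fintype.card {a // q a}).descFactorial (Fintype.card {a // p a})
        * (Fintype.card α - #T - Fintype.card {a // p a}).factorial := by
  have restrict_iff (τ : Perm {a // a ∉ T}) : (∀ x : {a // a ∉ T}, p x → q (τ x)) ↔
      ∀ a, p a → q ((Perm.subtypeEquivSubtypePerm (· ∉ T) τ).1 a) := by
    refine ⟨fun h a ha => ?_, fun h x hx => ?_⟩
    · rw [subtypeEquivSubtypePerm_apply_of_mem _ fun haT => hTp a haT ha]
      exact h _ ha
    · simpa only [subtypeEquivSubtypePerm_apply_of_mem (p := (· ∉ T)) τ x.2] using h x hx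
  have hp : Fintype.card {x : {a // a ∉ T} // p x} = Fintype.card {a // p a} :=
    Fintype.card_congr (subtypeSubtypeEquivSubtype fun {a} ha haT => hTp a haT ha)
  have hq : Fintype.card {x : {a // a ∉ T} // q x} = Fintype.card {a // q a} :=
    Fintype.card_congr (subtypeSubtypeEquivSubtype fun {a} ha haT => hTq a haT ha)
  calc Fintype.card {σ : Perm α // (∀ a, p a → q (σ a)) ∧ ∀ a ∈ T, σ a = a}
      = Fintype.card {τ : Perm {a // a ∉ T} // ∀ x : {a // a ∉ T}, p x → q (τ x)} := by
        refine Fintype.card_congr ((((Perm.subtypeEquivSubtypePerm _).subtypeEquiv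
          (q := fun σ => ∀ a, p a → q (σ.1 a)) restrict_iff).trans
          (subtypeSubtypeEquivSubtypeInter _ fun σ : Perm α => ∀ a, p a → q (σ a))).trans
          (subtypeEquivRight fun σ => ?_)).symm
        simp only [not_not, and_comm]
    _ = _ := by
        rw [card_mapsTo (p := fun x : {a // a ∉ T} => p x) (q := fun x => q x), hp, hq,
          Fintype.card_subtype_compl, Fintype.card_coe]

end Equiv.Perm

theorem Finset.card_biUnion_eq_sum_of_card_inf' {ι α : Type*} [DecidableEq α] {s : Finset ι}
    {S : ι → Finset α} (φ : ℕ → ℕ) (h : ∀ t ⊆ s, ∀ ht : t.Nonempty, #(t.inf' ht S) = φ #t) :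
    (#(s.biUnion S) : ℤ) = ∑ k ∈ Icc 1 #s, (-1) ^ (k + 1) * (#s).choose k * (φ k : ℤ) := by
  rw [inclusion_exclusion_card_biUnion]
  calc ∑ t : s.powerset.filter (·.Nonempty),
        (-1 : ℤ) ^ (#t.1 + 1) * #(t.1.inf' (mem_filter.1 t.2).2 S)
      = ∑ t ∈ s.powerset.filter (·.Nonempty), (-1 : ℤ) ^ (#t + 1) * φ #t := by
        rw [← sum_coe_sort _ fun t => (-1 : ℤ) ^ (#t + 1) * φ #t]
        refine sum_congr rfl fun t _ => ?_
        rw [h _ (mem_powerset.1 (mem_filter.1 t.2).1)]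
    _ = ∑ t ∈ s.powerset, if 1 ≤ #t then (-1 : ℤ) ^ (#t + 1) * φ #t else 0 := by
        rw [sum_filter]
        simp only [one_le_card]
    _ = _ := by
        rw [sum_powerset_apply_card fun k => if 1 ≤ k then (-1 : ℤ) ^ (k + 1) * φ k else 0]
        have hIcc : Icc 1 #s = (range (#s + 1)).filter (1 ≤ ·) := by
          ext k
          simp only [mem_Icc, mem_filter, mem_range]
          omega
        rw [hIcc, sum_filter]
        refine sum_congr rfl fun k _ => ?_
        split_ifs
        · rw [nsmul_eq_mul]
          ring
        · rw [smul_zero]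

theorem Fin.card_subtype_le_val (n c : ℕ) : Fintype.card {i : Fin n // c ≤ i.val} = n - c := by
  have := card_filter_add_card_filter_not (s := (univ : Finset (Fin n))) (·.val < c)
  simp only [Fin.card_filter_val_lt, not_lt, card_univ, Fintype.card_fin] at this
  rw [Fintype.card_subtype]
  omega

theorem Fin.card_perm_mapsTo_fixing {n f g : ℕ} (hgf : g ≤ f) (hfn : f ≤ n) (T : Finset (Fin n))
    (hT : ∀ i ∈ T, i.val < g) :
    #{σ : Equiv.Perm (Fin n) | (∀ i : Fin n, f ≤ i.val → g ≤ (σ i).val) ∧ ∀ i ∈ T, σ i = i}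
      = (n - g).descFactorial (n - f) * (f - #T).factorial := by
  have hTg : #T ≤ g := calc
    #T ≤ #{i : Fin n | i.val < g} := card_le_card fun i hi => mem_filter.2 ⟨mem_univ i, hT i hi⟩
    _ ≤ g := Fin.card_filter_val_lt.trans_le (min_le_right n g)
  have := Equiv.Perm.card_mapsTo_fixing (p := fun i : Fin n => f ≤ i.val)
    (q := fun i : Fin n => g ≤ i.val) T (fun i hi => (hT i hi).trans_le hgf |>.not_ge)
      (fun i hi => (hT i hi).not_ge)
  simp only [Fin.card_subtype_le_val, Fintype.card_fin] at this
  rw [← Fintype.card_subtype]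
  convert this using 3
  omega

theorem stmt12_general (n f g : ℕ) (hgf : g ≤ f) (hfn : f ≤ n) :
    (Set.ncard {σ : Equiv.Perm (Fin n) |
        (∀ i : Fin n, f ≤ i.val → g ≤ (σ i).val) ∧ ∃ i : Fin n, i.val < g ∧ σ i = i} : ℚ)
      = (Set.ncard {σ : Equiv.Perm (Fin n) |
            ∀ i : Fin n, f ≤ i.val → g ≤ (σ i).val} : ℚ)
        * ∑ k ∈ Finset.Icc 1 g,
            (-1 : ℚ)^(k+1) * (g.choose k) * (Nat.factorial (f - k)) / Nat.factorial f := by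
  set s : Finset (Fin n) := {i | i.val < g}
  set SM : Finset (Equiv.Perm (Fin n)) := {σ | ∀ i : Fin n, f ≤ i.val → g ≤ (σ i).val}
  have card_fixing (T : Finset (Fin n)) (hT : T ⊆ s) :
      #{σ ∈ SM | ∀ i ∈ T, σ i = i} = (n - g).descFactorial (n - f) * (f - #T).factorial := by
    rw [filter_filter]
    exact Fin.card_perm_mapsTo_fixing hgf hfn T fun i hi => (mem_filter.1 (hT hi)).2
  have hSM : #SM = (n - g).descFactorial (n - f) * f.factorial := by
    simpa using card_fixing ∅ (empty_subset _)
  have hs : #s = g := by simp [s, Fin.card_filter_val_lt, hgf.trans hfn]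
  have hunion : ({σ | (∀ i : Fin n, f ≤ i.val → g ≤ (σ i).val) ∧ ∃ i : Fin n, i.val < g ∧ σ i = i}
      : Finset (Equiv.Perm (Fin n))) = s.biUnion fun i => {σ ∈ SM | σ i = i} := by
    ext σ
    simp only [s, SM, mem_filter, mem_univ, true_and, mem_biUnion]
    exact ⟨fun ⟨h, i, hi, hσ⟩ => ⟨i, hi, h, hσ⟩, fun ⟨i, hi, h, hσ⟩ => ⟨h, i, hi, hσ⟩⟩
  have inclusion_exclusion := card_biUnion_eq_sum_of_card_inf' (S := fun i => {σ ∈ SM | σ i = i})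
    (fun k => (n - g).descFactorial (n - f) * (f - k).factorial) fun t hts ht => by
      rw [← card_fixing t hts]
      congr 1
      ext σ
      simp only [mem_inf', mem_filter, forall_and, ht.forall_const]
  rw [Set.ncard_eq_toFinset_card', Set.ncard_eq_toFinset_card', Set.toFinset_ofPred,
    Set.toFinset_ofPred, hunion, hSM, ← Int.cast_natCast, inclusion_exclusion, hs, mul_sum]
  push_cast
  refine sum_congr rfl fun k _ => ?_
  field_simp

/-- inclusion-exclusion count of the elements of `S_M` having at
least one fixed point among the first `g` positions. -/
theorem stmt12 (n f g : ℕ) (hg : 1 ≤ g) (hgf : g ≤ f) (hfn : f ≤ n) :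
    (Set.ncard {σ : Equiv.Perm (Fin n) |
        (∀ i : Fin n, f ≤ i.val → g ≤ (σ i).val) ∧ ∃ i : Fin n, i.val < g ∧ σ i = i} : ℚ)
      = (Set.ncard {σ : Equiv.Perm (Fin n) |
            ∀ i : Fin n, f ≤ i.val → g ≤ (σ i).val} : ℚ)
        * ∑ k ∈ Finset.Icc 1 g,
            (-1 : ℚ)^(k+1) * (g.choose k) * (Nat.factorial (f - k)) / Nat.factorial f :=
  stmt12_general n f g hgf hfn
end
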